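/- If I is a precipitous ideal over a regular uncountable cardinal κ, then the space X(I) admits a Kuratowski partition. -/
import Mathlib


/-- The `I`-positive sets. -/
abbrev PosSet {κ : Type*} (I : Set (Set κ)) : Type _ := {A : Set κ // A ∉ I}

/-- The space `X(I)` of sequences of positive sets with nonempty intersection
whose finite prefix intersections are positive. -/
def XI {κ : Type*} (I : Set (Set κ)) : Set (ℕ → PosSet I) :=
  {x | (⋂ n, (x n : Set κ)).Nonempty ∧ ∀ n : ℕ, (⋂ m < n, (x m : Set κ)) ∉ I}

/-- An `I`-partition of `S`: a maximal family of `I`-positive subsets of `S`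
pairwise intersecting in `I`. -/
def IsIPartition {κ : Type*} (I : Set (Set κ)) (S : Set κ) (W : Set (Set κ)) : Prop :=
  (∀ A ∈ W, A ⊆ S ∧ A ∉ I) ∧ (W.Pairwise fun A B => A ∩ B ∈ I) ∧
  ∀ B ⊆ S, B ∉ I → ∃ A ∈ W, A ∩ B ∉ I

/-- `W₁` refines `W₂`. -/
def Refines {κ : Type*} (W₁ W₂ : Set (Set κ)) : Prop := ∀ A ∈ W₁, ∃ B ∈ W₂, A ⊆ B

/-- `I` is a precipitous ideal on `κ`. -/
def IsPrecipitous {κ : Type u} (I : Set (Set κ)) : Prop :=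
  (∀ a : κ, ({a} : Set κ) ∈ I) ∧
  (∀ A B : Set κ, A ∈ I → B ⊆ A → B ∈ I) ∧
  (∀ s : Set (Set κ), Cardinal.mk s < Cardinal.mk κ → s ⊆ I → ⋃₀ s ∈ I) ∧
  (Set.univ : Set κ) ∉ I ∧
  ∀ S : Set κ, S ∉ I → ∀ W : ℕ → Set (Set κ),
    (∀ n, IsIPartition I S (W n)) → (∀ n, Refines (W (n + 1)) (W n)) →
    ∃ Y : ℕ → Set κ, (∀ n, Y n ∈ W n) ∧ (∀ n, Y (n + 1) ⊆ Y n) ∧ (⋂ n, Y n).Nonempty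

/-- `I⁺` carries the discrete topology. -/
instance {κ : Type*} (I : Set (Set κ)) : TopologicalSpace (PosSet I) := ⊥

def HasBaireProperty {X : Type*} [TopologicalSpace X] (A : Set X) : Prop :=
  ∃ V M : Set X, IsOpen V ∧ IsMeagre M ∧ A = symmDiff V M

def IsKuratowskiPartition {X : Type*} [TopologicalSpace X] (F : Set (Set X)) : Prop :=
  (∀ A ∈ F, IsMeagre A) ∧ ⋃₀ F = Set.univ ∧
  (F.Pairwise fun A B => A ∩ B = ∅) ∧ ∀ G ⊆ F, HasBaireProperty (⋃₀ G)

section KuratowskiAux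

variable {κ : Type u} {I : Set (Set κ)}

/-- every positive set is nonempty -/
lemma pos_nonempty (hprec : IsPrecipitous I)
    {S : Set κ} (hS : S ∉ I) : S.Nonempty := by
  have hpart : IsIPartition I S ({S} : Set (Set κ)) := by
    refine ⟨?_, ?_, ?_⟩
    · rintro A rfl; exact ⟨subset_rfl, hS⟩
    · exact Set.pairwise_singleton _ _
    · intro B hBS hB
      exact ⟨S, rfl, fun h => hB (hprec.2.1 _ _ h (Set.subset_inter hBS subset_rfl))⟩
  obtain ⟨Y, hYW, -, hne⟩ := hprec.2.2.2.2 S hS (fun _ => {S}) (fun _ => hpart)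
    (fun n A hA => ⟨S, rfl, by rw [Set.mem_singleton_iff] at hA; exact hA ▸ subset_rfl⟩)
  obtain ⟨a, ha⟩ := hne
  have h0 := hYW 0
  rw [Set.mem_singleton_iff] at h0
  exact ⟨a, h0 ▸ Set.mem_iInter.mp ha 0⟩

lemma union2_mem (hprec : IsPrecipitous I)
    (hunc : Cardinal.aleph0 < Cardinal.mk κ) {A B : Set κ} (hA : A ∈ I) (hB : B ∈ I) :
    A ∪ B ∈ I := by
  have : ⋃₀ ({A, B} : Set (Set κ)) ∈ I := by
    apply hprec.2.2.1
    · exact lt_trans (((Set.finite_singleton B).insert A).lt_aleph0) hunc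
    · rintro C (rfl | rfl) <;> assumption
  rwa [Set.sUnion_pair] at this

lemma pos_split (hprec : IsPrecipitous I)
    (hunc : Cardinal.aleph0 < Cardinal.mk κ) {A : Set κ} (hA : A ∉ I) (T : Set κ) :
    A ∩ T ∉ I ∨ A \ T ∉ I := by
  by_contra h
  push_neg at h
  exact hA (hprec.2.1 _ _ (union2_mem hprec hunc h.1 h.2) (by rw [Set.inter_union_diff]))

instance (I : Set (Set κ)) : DiscreteTopology (PosSet I) := ⟨rfl⟩

/-- cylinder -/
def Cyl (I : Set (Set κ)) (x : XI I) (n : ℕ) : Set (XI I) :=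
  {y | ∀ m < n, (y : ℕ → PosSet I) m = (x : ℕ → PosSet I) m}

lemma cyl_self (x : XI I) (n : ℕ) : x ∈ Cyl I x n := fun _ _ => rfl

lemma isOpen_cyl (x : XI I) (n : ℕ) : IsOpen (Cyl I x n) := by
  have : Cyl I x n = ⋂ m ∈ Finset.range n,
      (fun y : XI I => (y : ℕ → PosSet I) m) ⁻¹' {(x : ℕ → PosSet I) m} := by
    ext y
    simp [Cyl, Finset.mem_range]
  rw [this]
  refine isOpen_biInter_finset fun m _ => ?_
  exact (((continuous_apply m).comp continuous_subtype_val).isOpen_preimage _ (isOpen_discrete _))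

lemma exists_cyl_subset {O : Set (XI I)} (hO : IsOpen O) {x : XI I} (hx : x ∈ O) :
    ∃ n, Cyl I x n ⊆ O := by
  rw [isOpen_induced_iff] at hO
  obtain ⟨U, hU, rfl⟩ := hO
  obtain ⟨s, u, h1, h2⟩ := isOpen_pi_iff.mp hU _ hx
  refine ⟨(s.sup id) + 1, fun y hy => ?_⟩
  refine h2 fun m hm => ?_
  have hlt : m < s.sup id + 1 := Nat.lt_succ_of_le (Finset.le_sup (f := id) hm)
  rw [hy m hlt]
  exact (h1 m hm).2

lemma cyl_prefix {x y : XI I} {n : ℕ} (hy : y ∈ Cyl I x n) :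
    (⋂ m < n, ((y : ℕ → PosSet I) m : Set κ)) = ⋂ m < n, ((x : ℕ → PosSet I) m : Set κ) := by
  apply Set.iInter₂_congr
  intro m hm
  rw [hy m hm]

/-- the open set of sequences with some prefix intersection inside T -/
def UT (I : Set (Set κ)) (T : Set κ) : Set (XI I) :=
  {y | ∃ n, (⋂ m < n, ((y : ℕ → PosSet I) m : Set κ)) ⊆ T}

lemma isOpen_UT (T : Set κ) : IsOpen (UT I T) := by
  rw [isOpen_iff_forall_mem_open]
  rintro y ⟨n, hn⟩
  exact ⟨Cyl I y n, fun z hz => ⟨n, (cyl_prefix hz).trans_subset hn⟩, isOpen_cyl y n, cyl_self y n⟩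

lemma UT_spec {T : Set κ} {y : XI I} (hy : y ∈ UT I T) {a : κ}
    (ha : a ∈ ⋂ k, (((y : ℕ → PosSet I)) k : Set κ)) : a ∈ T := by
  obtain ⟨n, hn⟩ := hy
  exact hn (Set.mem_iInter₂.mpr fun m _ => Set.mem_iInter.mp ha m)

lemma mem_XI {x : XI I} :
    (⋂ n, ((x : ℕ → PosSet I) n : Set κ)).Nonempty ∧
      ∀ n : ℕ, (⋂ m < n, ((x : ℕ → PosSet I) m : Set κ)) ∉ I := x.2

/-- extension of a finite prefix by a positive subset -/
lemma exists_extension (hprec : IsPrecipitous I) (x : XI I) (n : ℕ)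
    {B : Set κ} (hB : B ∉ I) (hsub : B ⊆ ⋂ m < n, ((x : ℕ → PosSet I) m : Set κ)) :
    ∃ y : XI I, y ∈ Cyl I x n ∧ ((y : ℕ → PosSet I) n : Set κ) = B := by
  classical
  set z : ℕ → PosSet I := fun m => if m < n then (x : ℕ → PosSet I) m else ⟨B, hB⟩ with hz
  have hBz : ∀ m, B ⊆ (z m : Set κ) := by
    intro m
    by_cases hm : m < n
    · simp only [hz, if_pos hm]
      exact hsub.trans (Set.biInter_subset_of_mem hm)
    · simp only [hz, if_neg hm]
      exact subset_rfl
  have hzXI : z ∈ XI I := by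
    constructor
    · obtain ⟨b, hb⟩ := pos_nonempty hprec hB
      exact ⟨b, Set.mem_iInter.mpr fun m => hBz m hb⟩
    · intro k hk
      exact hB (hprec.2.1 _ _ hk (Set.subset_iInter₂ fun m _ => hBz m))
  refine ⟨⟨z, hzXI⟩, fun m hm => ?_, ?_⟩
  · simp only [hz, if_pos hm]
  · simp only [hz, if_neg (lt_irrefl n)]

lemma dense_UT (hprec : IsPrecipitous I) (hunc : Cardinal.aleph0 < Cardinal.mk κ)
    (T : Set κ) : Dense (UT I T ∪ UT I Tᶜ) := by
  rw [dense_iff_inter_open]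
  rintro O hO ⟨x, hx⟩
  obtain ⟨n, hC⟩ := exists_cyl_subset hO hx
  have hA : (⋂ m < n, ((x : ℕ → PosSet I) m : Set κ)) ∉ I := mem_XI.2 n
  have key : ∀ B : Set κ, B ∉ I → B ⊆ ⋂ m < n, ((x : ℕ → PosSet I) m : Set κ) →
      ∀ S : Set κ, B ⊆ S → ∃ y ∈ O, y ∈ UT I S := by
    intro B hB hBsub S hBS
    obtain ⟨y, hyC, hyn⟩ := exists_extension hprec x n hB hBsub
    refine ⟨y, hC hyC, n + 1, ?_⟩
    intro a ha
    have := Set.mem_iInter₂.mp ha n (Nat.lt_succ_self n)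
    rw [hyn] at this
    exact hBS this
  rcases pos_split hprec hunc hA T with h | h
  · obtain ⟨y, hyO, hyU⟩ := key _ h Set.inter_subset_left _ Set.inter_subset_right
    exact ⟨y, hyO, Or.inl hyU⟩
  · obtain ⟨y, hyO, hyU⟩ := key _ h Set.diff_subset Tᶜ (fun a ha => ha.2)
    exact ⟨y, hyO, Or.inr hyU⟩

lemma meagre_compl_UT (hprec : IsPrecipitous I) (hunc : Cardinal.aleph0 < Cardinal.mk κ)
    (T : Set κ) : IsMeagre ((UT I T ∪ UT I Tᶜ)ᶜ : Set (XI I)) := by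
  have hclosed : IsClosed ((UT I T ∪ UT I Tᶜ)ᶜ : Set (XI I)) ∧
      IsNowhereDense ((UT I T ∪ UT I Tᶜ)ᶜ : Set (XI I)) := by
    rw [isClosed_isNowhereDense_iff_compl, compl_compl]
    exact ⟨(isOpen_UT T).union (isOpen_UT Tᶜ), dense_UT hprec hunc T⟩
  rw [isMeagre_iff_countable_union_isNowhereDense]
  exact ⟨{(UT I T ∪ UT I Tᶜ)ᶜ}, by simpa using hclosed.2, Set.countable_singleton _, by simp⟩

end KuratowskiAux

/-- If `I` is a precipitous ideal on a regular uncountable cardinal `κ`, then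
`X(I)` admits a Kuratowski partition. -/
theorem stmt_9 {κ : Type u} (I : Set (Set κ))
    (hreg : (Cardinal.mk κ).IsRegular) (hunc : Cardinal.aleph0 < Cardinal.mk κ)
    (hprec : IsPrecipitous I) :
    ∃ F : Set (Set (XI I)), IsKuratowskiPartition F := by
  classical
  set f : XI I → κ := fun x => (mem_XI (x := x)).1.some with hf
  have hfmem : ∀ x : XI I, f x ∈ ⋂ n, ((x : ℕ → PosSet I) n : Set κ) :=
    fun x => (mem_XI (x := x)).1.some_mem
  refine ⟨Set.range (fun α => f ⁻¹' {α}), ?_, ?_, ?_, ?_⟩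
  · rintro A ⟨α, rfl⟩
    refine (meagre_compl_UT hprec hunc {α}).mono ?_
    rintro x (rfl : f x = α) (hU | hU)
    · obtain ⟨n, hn⟩ := hU
      exact mem_XI.2 n (hprec.2.1 _ _ (hprec.1 (f x)) hn)
    · exact UT_spec hU (hfmem x) rfl
  · ext x
    simp only [Set.mem_sUnion, Set.mem_univ, iff_true]
    exact ⟨f ⁻¹' {f x}, ⟨f x, rfl⟩, rfl⟩
  · rintro A ⟨α, rfl⟩ B ⟨β, rfl⟩ hne
    rw [Set.eq_empty_iff_forall_notMem]
    rintro x ⟨hα : f x = α, hβ : f x = β⟩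
    exact hne (by rw [← hα, ← hβ])
  · intro G hG
    set T : Set κ := {α | f ⁻¹' {α} ∈ G} with hT
    have hUn : ⋃₀ G = f ⁻¹' T := by
      ext x
      constructor
      · rintro ⟨A, hA, hxA⟩
        obtain ⟨α, rfl⟩ := hG hA
        have hfx : f x = α := hxA
        exact show f ⁻¹' {f x} ∈ G by rw [hfx]; exact hA
      · intro hx
        exact ⟨f ⁻¹' {f x}, hx, rfl⟩
    rw [hUn]
    have hVsub : UT I T ⊆ f ⁻¹' T := fun x hx => UT_spec hx (hfmem x)
    refine ⟨UT I T, f ⁻¹' T \ UT I T, isOpen_UT T, ?_, ?_⟩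
    · refine (meagre_compl_UT hprec hunc T).mono ?_
      rintro x ⟨hxT, hxU⟩ (hU | hU)
      · exact hxU hU
      · exact UT_spec hU (hfmem x) hxT
    · ext x
      simp only [Set.mem_symmDiff, Set.mem_diff]
      constructor
      · intro hx
        by_cases hU : x ∈ UT I T
        · exact Or.inl ⟨hU, fun h => h.2 hU⟩
        · exact Or.inr ⟨⟨hx, hU⟩, hU⟩
      · rintro (⟨hU, -⟩ | ⟨⟨hx, -⟩, -⟩)
        · exact hVsub hU
        · exact hx
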